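/- arXiv:2407.04054 — 2 statements merged into one kernel-verified Lean document; each statement's English description precedes it below -/
import Mathlib

section
/- Let G be a finite group and χ, ρ characters of G with c(χ) ⊆ c(ρ). If c(χⁱ) = c(ρⁱ) for some i ≥ 1, then c(χʲ) = c(ρʲ) for every j ≥ i. -/
open scoped Classical BigOperators

noncomputable section

namespace CharCover

/-- The inner product of class functions: `⟨f,h⟩ = |G|⁻¹ ∑ f(x) h(x⁻¹)`. -/
def classInner {G : Type*} [Group G] [Fintype G] (f h : G → ℂ) : ℂ :=
  (Fintype.card G : ℂ)⁻¹ * ∑ x : G, f x * h x⁻¹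

/-- `f` is the character of some finite-dimensional complex representation of `G`. -/
def IsChar (G : Type) [Group G] (f : G → ℂ) : Prop :=
  ∃ V : FDRep ℂ G, f = V.character

/-- `f` is the character of some irreducible complex representation of `G`. -/
def IsIrrChar (G : Type) [Group G] (f : G → ℂ) : Prop :=
  ∃ V : FDRep ℂ G, CategoryTheory.Simple V ∧ f = V.character

/-- The set `c(f)` of irreducible constituents of `f`. -/
def constituents (G : Type) [Group G] [Fintype G] (f : G → ℂ) : Set (G → ℂ) :=
  {θ | IsIrrChar G θ ∧ classInner f θ ≠ 0}

end CharCover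

open CategoryTheory Limits Module MonoidalCategory

/-!
For characters `α = χ_A`, `θ = χ_T` and an irreducible `ψ = χ_S`,
`⟨αθ, ψ⟩ = ⟨α, ψ θ̄⟩ = dim Hom(S ⊗ T*, A)`. Since every object of `FDRep ℂ G` is injective and
projective (Maschke), `Hom(X, A) ≠ 0` iff some simple `S'` maps nontrivially both to `X` and to
`A`, i.e. iff some constituent of `A` occurs in `X`. Hence `c(αθ)` only grows with `c(α)`, which
gives `c(χᵏ) ⊆ c(ρᵏ)` for all `k`; and for `j ≥ i ≥ 1`, from `c(χʲ) = c(ρʲ)` we get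
`c(ρ^(j+1)) ⊆ c(ρ χʲ) = c(ρ χ^(j-1) χ) ⊆ c(ρʲ χ) ⊆ c(χ^(j+1))`.
-/

namespace FDRep

variable {k G : Type} [Field k]

section Monoid

variable [Monoid G]

theorem injective_of_mono {X Y : FDRep k G} (f : X ⟶ Y) [Mono f] : Function.Injective f :=
  (Rep.mono_iff_injective ((forget₂ (FDRep k G) (Rep k G)).map f)).1 inferInstance

theorem isIso_of_bijective {X Y : FDRep k G} (f : X ⟶ Y) (hf : Function.Bijective f) :
    IsIso f :=
  have : IsIso ((forget (FDRep k G)).map f) := (isIso_iff_bijective _).2 hf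
  isIso_of_reflects_iso f (forget _)

theorem finrank_subobject_strictMono (X : FDRep k G) :
    StrictMono fun P : Subobject X ↦ finrank k (P : FDRep k G) := by
  intro P Q hPQ
  set f := Subobject.ofLE P Q hPQ.le
  have hinj : Function.Injective f := injective_of_mono f
  refine (LinearMap.finrank_le_finrank_of_injective (f := f.hom.hom.hom) hinj).lt_of_ne
    fun h ↦ hPQ.ne ?_
  have := isIso_of_bijective f
    ⟨hinj, (LinearMap.injective_iff_surjective_of_finrank_eq_finrank h).1 hinj⟩
  exact Subobject.eq_of_comm (asIso f) (Subobject.ofLE_arrow _)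

instance (X : FDRep k G) : IsArtinianObject X :=
  (isArtinianObject.is_iff X).2 (finrank_subobject_strictMono X).wellFoundedLT

end Monoid

section Group

variable [Group G] [Finite G] [NeZero (Nat.card G : k)]

theorem nontrivial_hom_of_simple {S X A : FDRep k G} [Simple S]
    (hX : Nontrivial (S ⟶ X)) (hA : Nontrivial (S ⟶ A)) : Nontrivial (X ⟶ A) := by
  obtain ⟨t, ht⟩ := exists_ne (0 : S ⟶ X)
  obtain ⟨u, hu⟩ := exists_ne (0 : S ⟶ A)
  have := mono_of_nonzero_from_simple ht
  refine nontrivial_of_ne (Injective.factorThru (𝟙 S) t ≫ u) 0 fun h ↦ hu ?_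
  rw [← Category.id_comp u, ← Injective.comp_factorThru (𝟙 S) t, Category.assoc, h, comp_zero]

theorem exists_simple_of_nontrivial_hom {X A : FDRep k G} (hXA : Nontrivial (X ⟶ A)) :
    ∃ S : FDRep k G, Simple S ∧ Nontrivial (S ⟶ X) ∧ Nontrivial (S ⟶ A) := by
  obtain ⟨f, hf⟩ := exists_ne (0 : X ⟶ A)
  have himage : ¬IsZero (Abelian.image f) := fun h ↦
    hf (by rw [← Abelian.image.fac f, h.eq_of_tgt (Abelian.factorThruImage f) 0, zero_comp])
  set s := simpleSubobjectArrow himage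
  have hs : ∀ {Y} (g : Abelian.image f ⟶ Y) [Mono g], s ≫ g ≠ 0 := fun g _ h ↦
    Simple.not_isZero _ (IsZero.of_mono_eq_zero _ h)
  refine ⟨simpleSubobject himage, inferInstance,
    nontrivial_of_ne (Projective.factorThru s (Abelian.factorThruImage f)) 0 fun h ↦ ?_,
    nontrivial_of_ne (s ≫ Abelian.image.ι f) 0 (hs _)⟩
  have hlift := Projective.factorThru_comp s (Abelian.factorThruImage f)
  rw [h, zero_comp] at hlift
  simpa using hs (𝟙 _) hlift.symm

end Group

end FDRep

namespace CharCover

section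

variable {G : Type} [Group G]

theorem IsChar.mul {α β : G → ℂ} (hα : IsChar G α) (hβ : IsChar G β) : IsChar G (α * β) := by
  obtain ⟨A, rfl⟩ := hα
  obtain ⟨B, rfl⟩ := hβ
  exact ⟨A ⊗ B, (FDRep.char_tensor A B).symm⟩

theorem isChar_one : IsChar G 1 :=
  ⟨FDRep.of (Representation.trivial ℂ G ℂ), funext fun g ↦ by simp [FDRep.character]⟩

theorem IsChar.pow {α : G → ℂ} (hα : IsChar G α) (n : ℕ) : IsChar G (α ^ n) := by
  induction n with
  | zero => exact isChar_one
  | succ n ih => exact pow_succ α n ▸ ih.mul hα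

variable [Fintype G]

theorem classInner_mul (f θ h : G → ℂ) :
    classInner (f * θ) h = classInner f (h * fun g ↦ θ g⁻¹) := by
  simp only [classInner, Pi.mul_apply, inv_inv, mul_assoc, mul_comm (θ _)]

theorem classInner_character_ne_zero_iff (V W : FDRep ℂ G) :
    classInner V.character W.character ≠ 0 ↔ Nontrivial (W ⟶ V) := by
  have : Invertible (Nat.card G : ℂ) := invertibleOfNonzero (by simp)
  rw [classInner, ← Nat.card_eq_fintype_card, FDRep.scalar_product_char_eq_finrank_equivariant,
    Nat.cast_ne_zero, ← Nat.pos_iff_ne_zero, finrank_pos_iff]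

theorem character_mem_constituents_iff {S V : FDRep ℂ G} [Simple S] :
    S.character ∈ constituents G V.character ↔ Nontrivial (S ⟶ V) :=
  (and_iff_right ⟨S, inferInstance, rfl⟩).trans (classInner_character_ne_zero_iff V S)

theorem character_mem_constituents_mul_iff {S A T : FDRep ℂ G} [Simple S] :
    S.character ∈ constituents G (A.character * T.character) ↔
      Nontrivial (S ⊗ FDRep.of (Representation.dual T.ρ) ⟶ A) := by
  have hdual : (S ⊗ FDRep.of (Representation.dual T.ρ)).character =
      S.character * fun g ↦ T.character g⁻¹ := by
    rw [FDRep.char_tensor]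
    exact congrArg _ (funext (FDRep.char_dual T))
  rw [← classInner_character_ne_zero_iff, hdual, ← classInner_mul]
  exact and_iff_right ⟨S, inferInstance, rfl⟩

theorem constituents_character_mul_subset {A B T : FDRep ℂ G}
    (h : constituents G A.character ⊆ constituents G B.character) :
    constituents G (A.character * T.character) ⊆ constituents G (B.character * T.character) := by
  rintro _ hψ
  obtain ⟨S, hS, rfl⟩ := hψ.1
  rw [character_mem_constituents_mul_iff] at hψ ⊢
  obtain ⟨S', hS', hS'X, hS'A⟩ := FDRep.exists_simple_of_nontrivial_hom hψ
  rw [← character_mem_constituents_iff] at hS'A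
  exact FDRep.nontrivial_hom_of_simple hS'X (character_mem_constituents_iff.1 (h hS'A))

theorem constituents_mul_subset_mul {α β γ δ : G → ℂ} (hα : IsChar G α) (hβ : IsChar G β)
    (hγ : IsChar G γ) (hδ : IsChar G δ) (hαβ : constituents G α ⊆ constituents G β)
    (hγδ : constituents G γ ⊆ constituents G δ) :
    constituents G (α * γ) ⊆ constituents G (β * δ) := by
  obtain ⟨A, rfl⟩ := hα
  obtain ⟨B, rfl⟩ := hβ
  obtain ⟨C, rfl⟩ := hγ
  obtain ⟨D, rfl⟩ := hδ
  calc constituents G (A.character * C.character)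
      ⊆ constituents G (B.character * C.character) := constituents_character_mul_subset hαβ
    _ = constituents G (C.character * B.character) := by rw [mul_comm]
    _ ⊆ constituents G (D.character * B.character) := constituents_character_mul_subset hγδ
    _ = constituents G (B.character * D.character) := by rw [mul_comm]

end

theorem constituents_pow_eq_of_eq {G : Type} [Group G] [Fintype G]
    (χ ρ : G → ℂ) (hχ : IsChar G χ) (hρ : IsChar G ρ)
    (hsub : constituents G χ ⊆ constituents G ρ)
    (i : ℕ) (hi : 1 ≤ i)
    (heq : constituents G (χ ^ i) = constituents G (ρ ^ i)) :
    ∀ j : ℕ, i ≤ j → constituents G (χ ^ j) = constituents G (ρ ^ j) := by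
  have hpow_subset (k : ℕ) : constituents G (χ ^ k) ⊆ constituents G (ρ ^ k) := by
    induction k with
    | zero => rfl
    | succ k ih =>
      rw [pow_succ, pow_succ]
      exact constituents_mul_subset_mul (hχ.pow k) (hρ.pow k) hχ hρ ih hsub
  intro j hij
  induction j, hij using Nat.le_induction with
  | base => exact heq
  | succ j hij ih =>
    obtain ⟨m, rfl⟩ : ∃ m, j = m + 1 := ⟨j - 1, by omega⟩
    have hmix : constituents G (ρ * χ ^ m) ⊆ constituents G (χ ^ (m + 1)) := by
      rw [ih, pow_succ' ρ]
      exact constituents_mul_subset_mul hρ hρ (hχ.pow m) (hρ.pow m) subset_rfl (hpow_subset m)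
    refine (hpow_subset _).antisymm ?_
    calc constituents G (ρ ^ (m + 1 + 1))
        = constituents G (ρ * ρ ^ (m + 1)) := by rw [pow_succ' ρ]
      _ ⊆ constituents G (ρ * χ ^ (m + 1)) :=
          constituents_mul_subset_mul hρ hρ (hρ.pow _) (hχ.pow _) subset_rfl ih.ge
      _ = constituents G (ρ * χ ^ m * χ) := by rw [pow_succ, mul_assoc]
      _ ⊆ constituents G (χ ^ (m + 1) * χ) :=
          constituents_mul_subset_mul (hρ.mul (hχ.pow m)) (hχ.pow _) hχ hχ hmix subset_rfl
      _ = constituents G (χ ^ (m + 1 + 1)) := by rw [← pow_succ]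

end CharCover
end
end

section
/- Let 1 ≤ k ≤ ⌊n/2⌋ and λ = (n−k, k). Then the covering number of the permutation character σ_λ of S_n is at least ⌈2(n−1)/(k+1)⌉. -/
open scoped Classical BigOperators

noncomputable section

namespace CharCover

abbrev PartN (n : ℕ) := Nat.Partition n

/-- The `i`-th largest part of a partition (0-indexed), `0` if out of range. -/
def part {n : ℕ} (μ : PartN n) (i : ℕ) : ℕ :=
  ((μ.parts.sort (· ≤ ·)).reverse).getD i 0

/-- `dd t μ` is the number of indices `i` with `μ_i − μ_{i+1} ≥ t`. -/
def dd (t : ℕ) {n : ℕ} (μ : PartN n) : ℕ :=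
  ((Finset.range n).filter (fun i => part μ (i + 1) + t ≤ part μ i)).card

/-- The `i`-th part (0-indexed) of the conjugate partition: the number of parts `≥ i+1`. -/
def conjPart {n : ℕ} (μ : PartN n) (i : ℕ) : ℕ :=
  Multiset.countP (fun a => i + 1 ≤ a) μ.parts

/-- `ddConj t μ` is the number of indices `i` with `μ'_i − μ'_{i+1} ≥ t` for the conjugate. -/
def ddConj (t : ℕ) {n : ℕ} (μ : PartN n) : ℕ :=
  ((Finset.range n).filter (fun i => conjPart μ (i + 1) + t ≤ conjPart μ i)).card

/-- The Durfee rank of a partition: the size of the largest square in its Young diagram. -/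
def durfee {n : ℕ} (μ : PartN n) : ℕ :=
  ((Finset.range n).filter (fun i => i + 1 ≤ part μ i)).card

/-- The permutation character of `S_n` acting on ordered systems of pairwise disjoint
`g`-invariant blocks of sizes `c i`: for `∑ c i = n` this is the character induced from the
trivial character of the Young subgroup of type `c`. -/
def permCharI {n : ℕ} {ι : Type} (c : ι → ℕ) (g : Equiv.Perm (Fin n)) : ℂ :=
  Nat.card {P : ι → Finset (Fin n) //
    (∀ i, (P i).card = c i) ∧ (∀ i j, i ≠ j → Disjoint (P i) (P j)) ∧
    (∀ i, (P i).image g = P i)}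

/-- `σ_μ`, the character of `S_n` induced from the trivial character of the Young subgroup. -/
def sigmaChar {n : ℕ} (μ : PartN n) : Equiv.Perm (Fin n) → ℂ :=
  permCharI (fun i : Fin n => part μ i)

/-- The irreducible character `χ_μ` of `S_n`, via the Jacobi–Trudi determinant
`χ_μ = ∑_σ sgn(σ) σ_{(μ_i + σ(i) - i)_i}` (terms with a negative entry vanish). -/
def irrChar {n : ℕ} (μ : PartN n) : Equiv.Perm (Fin n) → ℂ := fun g =>
  ∑ σ : Equiv.Perm (Fin n),
    ((Equiv.Perm.sign σ : ℤ) : ℂ) *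
      (if ∀ i : Fin n, (i : ℕ) ≤ part μ i + (σ i : ℕ) then
        permCharI (fun i : Fin n => part μ i + ((σ i : ℕ)) - (i : ℕ)) g
      else 0)

/-- The two-row partition `(n-k, k)`. -/
def twoRowP (n k : ℕ) (h1 : 0 < k) (h2 : k < n) : PartN n :=
  ⟨{n - k, k}, by intro i hi; simp at hi; omega, by simp; omega⟩

/-- The hook partition `(n-k, 1^k)`. -/
def hookP (n k : ℕ) (h : k < n) : PartN n :=
  ⟨(n - k) ::ₘ Multiset.replicate k 1, by
    intro i hi
    simp [Multiset.mem_replicate] at hi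
    omega, by
    simp [Multiset.sum_replicate]
    omega⟩

/-- The index of the block of the canonical set partition of type `μ` containing `x`. -/
def blockIdx {n : ℕ} (μ : PartN n) (x : Fin n) : ℕ :=
  ((Finset.range n).filter (fun k => ∑ j ∈ Finset.range (k + 1), part μ j ≤ (x : ℕ))).card

/-- The Young subgroup `S_μ ≤ S_n`: permutations preserving each block of the canonical
set partition of type `μ`. -/
def youngSubgroup {n : ℕ} (μ : PartN n) : Subgroup (Equiv.Perm (Fin n)) where
  carrier := {g | ∀ i : Fin n, blockIdx μ (g i) = blockIdx μ i}
  one_mem' := by intro i; simp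
  mul_mem' := by
    intro a b ha hb i
    simp only [Set.mem_setOf_eq] at ha hb ⊢
    rw [Equiv.Perm.mul_apply, ha, hb]
  inv_mem' := by
    intro a ha i
    simp only [Set.mem_setOf_eq] at ha ⊢
    simpa using (ha (a⁻¹ i)).symm

/-- Inner product of the restrictions to a subgroup `H`. -/
def subInner {G : Type*} [Group G] [Fintype G] (H : Subgroup G) (f h : G → ℂ) : ℂ :=
  (Nat.card H : ℂ)⁻¹ * ∑ x : H, f (x : G) * h (((x⁻¹ : H) : G))

/-- The canonical embedding `S_a × S_b → S_n` when `a + b = n`. -/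
def embedPerm {a b n : ℕ} (h : a + b = n) (x : Equiv.Perm (Fin a)) (y : Equiv.Perm (Fin b)) :
    Equiv.Perm (Fin n) :=
  ((finSumFinEquiv.trans (finCongr h)).permCongr) (Equiv.sumCongr x y)

/-- The Littlewood–Richardson coefficient
`c^λ_{αβ} = ⟨Res_{S_a × S_b} χ_λ, χ_α ⊗ χ_β⟩`. -/
def lr {a b n : ℕ} (h : a + b = n) (lam : PartN n) (α : PartN a) (β : PartN b) : ℂ :=
  ((Nat.factorial a * Nat.factorial b : ℕ) : ℂ)⁻¹ *
    ∑ x : Equiv.Perm (Fin a), ∑ y : Equiv.Perm (Fin b),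
      irrChar lam (embedPerm h x y) * irrChar α x⁻¹ * irrChar β y⁻¹

/-- The Kronecker coefficient `g_{μνλ} = ⟨χ_μ χ_ν, χ_λ⟩`. -/
def kron {n : ℕ} (μ ν lam : PartN n) : ℂ :=
  classInner (fun g => irrChar μ g * irrChar ν g) (irrChar lam)

lemma sum_countP (n : ℕ) (s : Multiset ℕ) (hs : ∀ a ∈ s, a ≤ n) :
    ∑ i ∈ Finset.range n, Multiset.countP (fun a => i + 1 ≤ a) s = s.sum := by
  induction s using Multiset.induction with
  | empty => simp
  | cons a s ih =>
      have ha : a ≤ n := hs a (Multiset.mem_cons_self a s)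
      have hs' : ∀ b ∈ s, b ≤ n := fun b hb => hs b (Multiset.mem_cons_of_mem hb)
      simp only [Multiset.countP_cons, Multiset.sum_cons]
      rw [Finset.sum_add_distrib, ih hs']
      have h3 : ∑ i ∈ Finset.range n, (if i + 1 ≤ a then 1 else 0) = a := by
        rw [Finset.sum_boole]
        have h2 : (Finset.range n).filter (fun i => i + 1 ≤ a) = Finset.range a := by
          ext i; simp only [Finset.mem_filter, Finset.mem_range]; omega
        rw [h2, Finset.card_range]
        simp
      omega

/-- The conjugate (transpose) partition. -/
def conjP {n : ℕ} (μ : PartN n) : PartN n where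
  parts := (Multiset.map (fun i => conjPart μ i) (Finset.range n).val).filter (0 < ·)
  parts_pos := fun {i} hi => (Multiset.mem_filter.mp hi).2
  parts_sum := by
    set t := Multiset.map (fun i => conjPart μ i) (Finset.range n).val with ht
    have h1 : (t.filter (0 < ·)).sum + (t.filter (fun a => ¬ 0 < a)).sum = t.sum := by
      rw [← Multiset.sum_add, Multiset.filter_add_not]
    have h2 : (t.filter (fun a => ¬ 0 < a)).sum = 0 := by
      apply Multiset.sum_eq_zero
      intro x hx
      have := (Multiset.mem_filter.mp hx).2
      omega
    have h3 : t.sum = ∑ i ∈ Finset.range n, conjPart μ i := by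
      rw [Finset.sum_eq_multiset_sum]
    have h4 : ∑ i ∈ Finset.range n, conjPart μ i = n := by
      have hle : ∀ a ∈ μ.parts, a ≤ n := by
        intro a ha
        have h5 := Multiset.single_le_sum (fun x _ => Nat.zero_le x) a ha
        rw [μ.parts_sum] at h5
        exact h5
      simp only [conjPart]
      rw [sum_countP n μ.parts hle]
      exact μ.parts_sum
    omega


/-!
When `r (k + 1) < 2 (n - 1)` the sign character is not a constituent of `σ_λ ^ r`. Indeed
`σ_λ(g) ^ r` counts the `r`-tuples of `g`-invariant `k`-sets, so `n! ⟨σ_λ ^ r, sgn⟩` is a sum,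
over `r`-tuples `t` of `k`-sets, of the signs of the permutations fixing `t`. That inner sum
vanishes as soon as a transposition `(a b)` fixes `t`, i.e. as soon as no set of `t` separates `a`
from `b`; and separating all `n` points would need `n` distinct membership codes in `Fin r` of
total size `r k`, at most one empty and at most `r` of them singletons: `r k ≥ r + 2 (n - 1 - r)`.

Most of the work is to see that the Jacobi–Trudi determinant defining `χ_(1^n)` is the sign
character. A permutation `σ` contributes only if `σ i ≥ i - 1` for all `i`; then the block sizes
`σ i + 1 - i` lay out consecutive blocks, and the determinant becomes a signed count of ordered
partitions of the cycles of `g` into blocks. Removing the first block gives the recursion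
`f(A) = -∑_{∅ ≠ B ⊆ A} f(A \ B)` over `g`-invariant sets, solved by `(-1) ^ #(cycles in A)`.
-/

section Orbits

variable {α : Type*} [DecidableEq α] {g : Equiv.Perm α} {A B : Finset α} {x y : α}

lemma image_perm_eq_self_iff : A.image g = A ↔ ∀ x ∈ A, g x ∈ A := by
  refine ⟨fun h x hx => h ▸ Finset.mem_image_of_mem g hx, fun h => ?_⟩
  exact Finset.eq_of_subset_of_card_le (by simpa [Finset.image_subset_iff] using h)
    (Finset.card_image_of_injective A g.injective).ge

lemma mem_of_sameCycle [Finite α] (hA : A.image g = A) (hx : x ∈ A) (hxy : g.SameCycle x y) :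
    y ∈ A := by
  obtain ⟨i, rfl⟩ := hxy.exists_nat_pow_eq
  clear hxy
  induction i with
  | zero => simpa using hx
  | succ i ih => rw [pow_succ', Equiv.Perm.mul_apply]; exact image_perm_eq_self_iff.1 hA _ ih

lemma image_sdiff_of_image_eq_self (hA : A.image g = A) (hB : B.image g = B) :
    (A \ B).image g = A \ B := by
  rw [Finset.image_sdiff _ _ g.injective, hA, hB]

lemma image_swap_eq_self {a b : α} (h : a ∈ B ↔ b ∈ B) :
    B.image (Equiv.swap a b) = B :=
  image_perm_eq_self_iff.2 fun x hx => by
    rw [Equiv.swap_apply_def]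
    split_ifs with hxa hxb
    · exact h.1 (hxa ▸ hx)
    · exact h.2 (hxb ▸ hx)
    · exact hx

variable [Fintype α]

def orbitFinset (g : Equiv.Perm α) (x : α) : Finset α := {y | g.SameCycle x y}

@[simp]
lemma mem_orbitFinset : y ∈ orbitFinset g x ↔ g.SameCycle x y := by simp [orbitFinset]

lemma mem_orbitFinset_self : x ∈ orbitFinset g x := mem_orbitFinset.2 .rfl

lemma orbitFinset_eq_of_mem (h : y ∈ orbitFinset g x) : orbitFinset g y = orbitFinset g x := by
  ext z
  simp only [mem_orbitFinset] at h ⊢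
  exact ⟨h.trans, h.symm.trans⟩

lemma image_orbitFinset : (orbitFinset g x).image g = orbitFinset g x :=
  image_perm_eq_self_iff.2 fun _ hy =>
    mem_orbitFinset.2 (Equiv.Perm.sameCycle_apply_right.2 (mem_orbitFinset.1 hy))

lemma orbitFinset_subset (hA : A.image g = A) (hx : x ∈ A) : orbitFinset g x ⊆ A :=
  fun _ hy => mem_of_sameCycle hA hx (mem_orbitFinset.1 hy)

def orbitCount (g : Equiv.Perm α) (A : Finset α) : ℕ := (A.image (orbitFinset g)).card

lemma biUnion_image_orbitFinset (hA : A.image g = A) :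
    (A.image (orbitFinset g)).biUnion id = A := by
  ext x
  simp only [Finset.mem_biUnion, Finset.mem_image, id]
  exact ⟨fun ⟨_, ⟨a, ha, h⟩, hx⟩ => orbitFinset_subset hA ha (h ▸ hx),
    fun hx => ⟨_, ⟨x, hx, rfl⟩, mem_orbitFinset_self⟩⟩

lemma image_orbitFinset_biUnion {S : Finset (Finset α)} (hS : S ⊆ A.image (orbitFinset g)) :
    (S.biUnion id).image (orbitFinset g) = S := by
  ext o
  simp only [Finset.mem_image, Finset.mem_biUnion, id]
  constructor
  · rintro ⟨x, ⟨o', ho', hx⟩, rfl⟩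
    obtain ⟨a, -, rfl⟩ := Finset.mem_image.1 (hS ho')
    rwa [orbitFinset_eq_of_mem hx]
  · intro ho
    obtain ⟨a, -, rfl⟩ := Finset.mem_image.1 (hS ho)
    exact ⟨a, ⟨_, ho, mem_orbitFinset_self⟩, rfl⟩

lemma orbitCount_sdiff (hB : B.image g = B) (hBA : B ⊆ A) :
    orbitCount g (A \ B) + orbitCount g B = orbitCount g A := by
  have h : (A \ B).image (orbitFinset g) = A.image (orbitFinset g) \ B.image (orbitFinset g) := by
    ext o
    simp only [Finset.mem_image, Finset.mem_sdiff]
    constructor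
    · rintro ⟨a, ⟨ha, haB⟩, rfl⟩
      exact ⟨⟨a, ha, rfl⟩, fun ⟨b, hb, hba⟩ =>
        haB (orbitFinset_subset hB hb (hba ▸ mem_orbitFinset_self))⟩
    · rintro ⟨⟨a, ha, rfl⟩, h⟩
      exact ⟨a, ⟨ha, fun haB => h ⟨a, haB, rfl⟩⟩, rfl⟩
  rw [orbitCount, orbitCount, orbitCount, h,
    Finset.card_sdiff_add_card_eq_card (Finset.image_subset_image hBA)]

lemma sum_neg_one_pow_orbitCount (hA : A.image g = A) (hA₀ : A.Nonempty) :
    ∑ B ∈ A.powerset with B.Nonempty ∧ B.image g = B, (-1 : ℤ) ^ orbitCount g B = -1 := by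
  -- invariant subsets of `A` are the unions of sets of cycles of `g` in `A`
  have h : ∑ B ∈ A.powerset with B.image g = B, (-1 : ℤ) ^ orbitCount g B = 0 := by
    rw [← Finset.sum_powerset_neg_one_pow_card_of_nonempty (hA₀.image (orbitFinset g))]
    refine Finset.sum_nbij' (fun B => B.image (orbitFinset g)) (fun S => S.biUnion id)
      ?_ ?_ ?_ ?_ fun _ _ => by rw [orbitCount]
    · intro B hB
      simp only [Finset.mem_filter, Finset.mem_powerset] at hB ⊢
      exact Finset.image_subset_image hB.1
    · intro S hS
      simp only [Finset.mem_filter, Finset.mem_powerset] at hS ⊢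
      refine ⟨fun x hx => ?_, image_perm_eq_self_iff.2 fun x hx => ?_⟩ <;>
        obtain ⟨o, ho, hxo⟩ := Finset.mem_biUnion.1 hx <;>
        obtain ⟨a, ha, rfl⟩ := Finset.mem_image.1 (hS ho)
      · exact orbitFinset_subset hA ha hxo
      · exact Finset.mem_biUnion.2 ⟨_, ho, image_perm_eq_self_iff.1 image_orbitFinset x hxo⟩
    · intro B hB
      exact biUnion_image_orbitFinset (Finset.mem_filter.1 hB).2
    · intro S hS
      exact image_orbitFinset_biUnion (Finset.mem_powerset.1 hS)
  rw [Finset.sum_eq_add_sum_sdiff_singleton_of_mem (i := ∅) (by simp)] at h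
  have hne : (A.powerset.filter fun B => B.image g = B) \ {∅} =
      A.powerset.filter fun B => B.Nonempty ∧ B.image g = B := by
    ext B
    simp only [Finset.mem_sdiff, Finset.mem_filter, Finset.mem_powerset, Finset.mem_singleton,
      Finset.nonempty_iff_ne_empty]
    tauto
  rw [hne, orbitCount, Finset.image_empty, Finset.card_empty, pow_zero] at h
  linarith

end Orbits

section Sign
open Equiv.Perm
variable {α : Type*} [Fintype α] [DecidableEq α] {g : Equiv.Perm α} {x : α}

lemma orbitFinset_of_notMem_support (hx : x ∉ g.support) : orbitFinset g x = {x} := by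
  ext y
  rw [mem_orbitFinset, Finset.mem_singleton]
  exact ⟨fun h => (h.eq_of_left (notMem_support.1 hx)).symm, fun h => h ▸ .rfl⟩

lemma orbitFinset_of_mem_support (hx : x ∈ g.support) :
    orbitFinset g x = (g.cycleOf x).support := by
  ext y
  rw [mem_orbitFinset, mem_support_cycleOf_iff, and_iff_left hx]

lemma image_orbitFinset_support :
    g.support.image (orbitFinset g) = g.cycleFactorsFinset.image support := by
  ext o
  simp only [Finset.mem_image]
  constructor
  · rintro ⟨x, hx, rfl⟩
    exact ⟨g.cycleOf x, cycleOf_mem_cycleFactorsFinset_iff.2 hx,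
      (orbitFinset_of_mem_support hx).symm⟩
  · rintro ⟨c, hc, rfl⟩
    obtain ⟨x, hxc⟩ := (mem_cycleFactorsFinset_iff.1 hc).1.nonempty_support
    have hxg := mem_cycleFactorsFinset_support_le hc hxc
    exact ⟨x, hxg, by rw [orbitFinset_of_mem_support hxg, cycle_is_cycleOf hxc hc]⟩

lemma orbitCount_univ :
    orbitCount g Finset.univ = (Fintype.card α - g.support.card) + g.cycleFactorsFinset.card := by
  have hfix : g.supportᶜ.image (orbitFinset g) = g.supportᶜ.image ({·}) :=
    Finset.image_congr fun x hx => orbitFinset_of_notMem_support (Finset.mem_compl.1 hx)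
  have hsupp : Set.InjOn support (g.cycleFactorsFinset : Set (Equiv.Perm α)) := by
    intro c₁ hc₁ c₂ hc₂ h
    obtain ⟨x, hx⟩ := (mem_cycleFactorsFinset_iff.1 hc₁).1.nonempty_support
    rw [cycle_is_cycleOf hx hc₁, cycle_is_cycleOf (h ▸ hx) hc₂]
  have hdisj :
      Disjoint (g.supportᶜ.image (orbitFinset g)) (g.support.image (orbitFinset g)) := by
    rw [Finset.disjoint_left]
    intro o ho ho'
    obtain ⟨x, hx, rfl⟩ := Finset.mem_image.1 ho
    obtain ⟨y, hy, hxy⟩ := Finset.mem_image.1 ho'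
    rw [orbitFinset_of_notMem_support (Finset.mem_compl.1 hx)] at hxy
    have : y = x := by simpa [hxy] using (mem_orbitFinset_self : y ∈ orbitFinset g y)
    exact Finset.mem_compl.1 hx (this ▸ hy)
  rw [orbitCount, ← Finset.union_compl g.support, Finset.union_comm, Finset.image_union,
    Finset.card_union_of_disjoint hdisj, hfix, image_orbitFinset_support,
    Finset.card_image_of_injective _ Finset.singleton_injective,
    Finset.card_image_of_injOn hsupp, Finset.card_compl]

lemma sign_eq_neg_one_pow_orbitCount :
    (sign g : ℤ) = (-1) ^ (Fintype.card α + orbitCount g Finset.univ) := by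
  have hle := g.support.card_le_univ
  rw [sign_of_cycleType, orbitCount_univ, sum_cycleType, cycleType_def, Multiset.card_map,
    ← Finset.card_def]
  push_cast
  rw [show Fintype.card α + (Fintype.card α - g.support.card + g.cycleFactorsFinset.card) =
    (g.support.card + g.cycleFactorsFinset.card) + 2 * (Fintype.card α - g.support.card) by omega,
    pow_add _ (_ + _), pow_mul]
  simp

end Sign

section Hessenberg
open Equiv Equiv.Perm

lemma le_apply_add_one_decomposeFin {n : ℕ} {p : Fin (n + 1)} {τ : Equiv.Perm (Fin n)}
    (hσ : ∀ i : Fin (n + 1), (i : ℕ) ≤ (decomposeFin.symm (p, τ) i : ℕ) + 1) :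
    (∀ j : Fin n, (j : ℕ) ≤ (τ j : ℕ) + 1) ∧
      (Finset.univ.filter fun i => decomposeFin.symm (p, τ) i < i).card =
        (Finset.univ.filter fun j => τ j < j).card + if p = 0 then 0 else 1 := by
  have happly (j : Fin n) : decomposeFin.symm (p, τ) j.succ = swap 0 p (τ j).succ :=
    decomposeFin_symm_apply_succ τ p j
  rw [Fin.card_filter_univ_succ, if_neg (by simp [decomposeFin_symm_apply_zero])]
  by_cases hp : p = 0
  · subst hp
    have hτ (j : Fin n) : decomposeFin.symm (0, τ) j.succ = (τ j).succ := by
      rw [happly, swap_self, Equiv.refl_apply]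
    refine ⟨fun j => ?_, by simp [hτ]⟩
    simpa [hτ] using hσ j.succ
  · set j₀ := τ.symm (p.pred hp)
    have hj₀ : (τ j₀).succ = p := by simp [j₀]
    have hσj₀ : decomposeFin.symm (p, τ) j₀.succ = 0 := by
      rw [happly, hj₀, swap_apply_right]
    -- the permutation sends `j₀ + 1` to `0`, so `j₀ = 0`: the one extra index with `σ i < i`
    have hj₀_val : (j₀ : ℕ) = 0 := by simpa [hσj₀] using hσ j₀.succ
    have hne (j : Fin n) (hj : j ≠ j₀) : decomposeFin.symm (p, τ) j.succ = (τ j).succ := by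
      rw [happly, swap_apply_of_ne_of_ne (Fin.succ_ne_zero _)]
      rwa [← hj₀, Ne, Fin.succ_inj, τ.injective.eq_iff]
    have hfilter : (Finset.univ.filter fun j : Fin n =>
        decomposeFin.symm (p, τ) j.succ < j.succ) =
          insert j₀ (Finset.univ.filter fun j => τ j < j) := by
      ext j
      by_cases hj : j = j₀
      · subst hj
        simp only [hσj₀, Finset.mem_filter, Finset.mem_insert, Fin.succ_pos]
        simp
      · simp only [Finset.mem_filter, Finset.mem_insert, hne j hj, hj, Fin.succ_lt_succ_iff]
        simp
    refine ⟨fun j => ?_, ?_⟩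
    · by_cases hj : j = j₀
      · rw [hj, hj₀_val]
        exact Nat.zero_le _
      · simpa [hne j hj] using hσ j.succ
    · have hj₀τ : j₀ ∉ Finset.univ.filter fun j => τ j < j := by
        rw [Finset.mem_filter, Fin.lt_def, hj₀_val]
        simp
      rw [hfilter, Finset.card_insert_of_notMem hj₀τ, if_neg hp]

lemma sign_eq_neg_one_pow_of_le_apply_add_one :
    ∀ {n : ℕ} (σ : Equiv.Perm (Fin n)), (∀ i : Fin n, (i : ℕ) ≤ (σ i : ℕ) + 1) →
      (sign σ : ℤ) = (-1) ^ (Finset.univ.filter fun i => σ i < i).card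
  | 0, σ, _ => by simp [Subsingleton.elim σ 1]
  | n + 1, σ, hσ => by
    obtain ⟨⟨p, τ⟩, rfl⟩ := decomposeFin.symm.surjective σ
    obtain ⟨hτ, hcard⟩ := le_apply_add_one_decomposeFin hσ
    rw [decomposeFin.symm_sign, hcard, pow_add]
    push_cast
    rw [sign_eq_neg_one_pow_of_le_apply_add_one τ hτ]
    split_ifs <;> simp

end Hessenberg

section Stacking

variable {n : ℕ} (c : Fin n → ℕ)

def prefixSum (j : ℕ) : ℕ := ∑ i ∈ Finset.univ.filter (fun i : Fin n => (i : ℕ) < j), c i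

lemma prefixSum_succ (i : Fin n) : prefixSum c (i + 1) = prefixSum c i + c i := by
  have : Finset.univ.filter (fun j : Fin n => (j : ℕ) < i + 1) =
      insert i (Finset.univ.filter fun j : Fin n => (j : ℕ) < i) := by
    ext j; simp [Fin.ext_iff]; omega
  rw [prefixSum, prefixSum, this, Finset.sum_insert (by simp), add_comm]

lemma prefixSum_mono : Monotone (prefixSum c) := fun _ _ h =>
  Finset.sum_le_sum_of_subset fun i => by
    simp only [Finset.mem_filter, Finset.mem_univ, true_and]
    omega

lemma prefixSum_of_le {j : ℕ} (hj : n ≤ j) : prefixSum c j = ∑ i, c i := by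
  rw [prefixSum, Finset.filter_true_of_mem fun i _ => lt_of_lt_of_le i.isLt hj]

lemma prefixSum_eq_of_forall {j₁ j₂ : ℕ} (h₁₂ : j₁ ≤ j₂)
    (h : ∀ i : Fin n, j₁ ≤ i → (i : ℕ) < j₂ → c i = 0) :
    prefixSum c j₂ = prefixSum c j₁ := by
  refine (Finset.sum_subset (fun i => by
    simp only [Finset.mem_filter, Finset.mem_univ, true_and]
    omega) fun i hi hi' => ?_).symm
  simp only [Finset.mem_filter, Finset.mem_univ, true_and, not_lt] at hi hi'
  exact h i hi' hi

/-- The nonzero entries of `c` are the lengths of consecutive blocks filling the positions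
from `a` on: every nonzero entry sits where the previous blocks end. -/
def IsStacked (a : ℕ) : Prop := ∀ j, c j ≠ 0 → a + prefixSum c j = j

variable {c}

lemma IsStacked.ne_zero_of_prefixSum_eq (hc : IsStacked c 0) (hsum : ∑ i, c i = n) {j : Fin n}
    (hj : prefixSum c j = j) : c j ≠ 0 := by
  intro hcj
  have hex : ∃ i : Fin n, j ≤ i ∧ c i ≠ 0 := by
    by_contra! h
    have := prefixSum_eq_of_forall c j.isLt.le fun i hi _ => h i hi
    rw [prefixSum_of_le c le_rfl, hsum, hj] at this
    exact j.isLt.ne' this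
  obtain ⟨i, ⟨hji, hci⟩, hmin⟩ := WellFounded.has_min wellFounded_lt _ hex
  have hpre : prefixSum c i = prefixSum c j :=
    prefixSum_eq_of_forall c hji fun k hjk hki => by_contra fun hck => hmin k ⟨hjk, hck⟩ hki
  have := hc i hci
  rw [hpre, hj, zero_add] at this
  exact hci (Fin.ext this ▸ hcj)

lemma sum_eq_and_isStacked_of_perm {σ : Equiv.Perm (Fin n)}
    (hσ : ∀ i, (σ i : ℕ) + 1 = c i + i) :
    (∑ i, c i = n) ∧ IsStacked c 0 := by
  constructor
  · have h := Finset.sum_congr rfl fun i (_ : i ∈ Finset.univ) => hσ i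
    rw [Finset.sum_add_distrib, Finset.sum_add_distrib, Equiv.sum_comp σ (fun i => (i : ℕ))] at h
    simp only [Finset.sum_const, Finset.card_univ, Fintype.card_fin, smul_eq_mul, mul_one] at h
    omega
  · intro j hj
    have hσj : (j : ℕ) ≤ σ j := by have := hσ j; omega
    set I : Finset (Fin n) := {i | (i : ℕ) < j}
    have hI : I.map σ.symm.toEmbedding = I := Finset.map_eq_of_subset fun v hv => by
      obtain ⟨u, hu, rfl⟩ := Finset.mem_map.1 hv
      simp only [I, Finset.mem_filter, Finset.mem_univ, true_and] at hu ⊢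
      have h₁ := hσ (σ.symm u)
      rw [Equiv.apply_symm_apply] at h₁
      have h₂ : σ.symm u ≠ j := fun h => by rw [← h, Equiv.apply_symm_apply] at hσj; omega
      have h₃ : (σ.symm u : ℕ) ≠ j := fun h => h₂ (Fin.ext h)
      simp only [Equiv.toEmbedding_apply]
      omega
    have hsumI : ∑ i ∈ I, (σ i : ℕ) = ∑ i ∈ I, (i : ℕ) := by
      conv_lhs => rw [← hI]
      simp
    have h := Finset.sum_congr rfl fun i (_ : i ∈ I) => hσ i
    rw [Finset.sum_add_distrib, Finset.sum_add_distrib, hsumI] at h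
    have hcard : I.card = j := by
      simp only [I, Fin.card_filter_val_lt]; omega
    simp only [Finset.sum_const, smul_eq_mul, mul_one, hcard] at h
    have : prefixSum c j = ∑ i ∈ I, c i := rfl
    omega

lemma IsStacked.add_le (hc : IsStacked c 0) (hsum : ∑ i, c i = n) (i : Fin n) :
    c i + i ≤ n := by
  by_cases hci : c i = 0
  · omega
  · have := hc i hci
    have := prefixSum_succ c i
    have := prefixSum_mono c (show (i : ℕ) + 1 ≤ n from i.isLt)
    rw [prefixSum_of_le c le_rfl, hsum] at this
    omega

lemma IsStacked.one_le_add (hc : IsStacked c 0) (hsum : ∑ i, c i = n) (i : Fin n) :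
    1 ≤ c i + i := by
  by_cases hi : (i : ℕ) = 0
  · have := hc.ne_zero_of_prefixSum_eq hsum (j := i) (by simp [prefixSum, hi])
    omega
  · omega

lemma IsStacked.add_ne_add (hc : IsStacked c 0) (hsum : ∑ i, c i = n) {i₁ i₂ : Fin n}
    (h₁₂ : (i₁ : ℕ) < i₂) : c i₁ + i₁ ≠ c i₂ + i₂ := by
  intro heq
  have hp₁ := hc i₁ (by omega)
  have := prefixSum_succ c i₁
  have hgap (i : Fin n) (h : (i₁ : ℕ) + 1 ≤ i) (h' : (i : ℕ) < i₂) : c i = 0 :=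
    by_contra fun hci => by
      have := hc i hci
      have := prefixSum_mono c h
      omega
  have hp₂ := prefixSum_eq_of_forall c (by omega) hgap
  by_cases hc₂ : c i₂ = 0
  · exact hc.ne_zero_of_prefixSum_eq hsum (by omega) hc₂
  · have := hc i₂ hc₂
    omega

lemma IsStacked.exists_perm (hc : IsStacked c 0) (hsum : ∑ i, c i = n) :
    ∃ σ : Equiv.Perm (Fin n), ∀ i, (σ i : ℕ) + 1 = c i + i := by
  let f (i : Fin n) : Fin n :=
    ⟨c i + i - 1, by have := hc.add_le hsum i; have := hc.one_le_add hsum i; omega⟩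
  have hf : Function.Injective f := fun i₁ i₂ h => by
    have hv : c i₁ + i₁ = c i₂ + i₂ := by
      have h' := congrArg Fin.val h
      simp only [f] at h'
      have := hc.one_le_add hsum i₁
      have := hc.one_le_add hsum i₂
      omega
    rcases lt_trichotomy (i₁ : ℕ) i₂ with h' | h' | h'
    · exact absurd hv (hc.add_ne_add hsum h')
    · exact Fin.ext h'
    · exact absurd hv.symm (hc.add_ne_add hsum h')
  refine ⟨Equiv.ofBijective f (Finite.injective_iff_bijective.1 hf), fun i => ?_⟩
  have := hc.one_le_add hsum i
  simp only [Equiv.ofBijective_apply, f]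
  omega

lemma prefixSum_update_of_le {k : Fin n} {j : ℕ} (hkj : j ≤ k) (x : ℕ) :
    prefixSum (Function.update c k x) j = prefixSum c j :=
  Finset.sum_congr rfl fun i hi => Function.update_of_ne (by
    rintro rfl
    simp only [Finset.mem_filter] at hi
    omega) _ _

lemma prefixSum_update_of_lt {k : Fin n} {j : ℕ} (hkj : (k : ℕ) < j) (x : ℕ) :
    prefixSum (Function.update c k x) j + c k = prefixSum c j + x := by
  have hk : k ∈ Finset.univ.filter (fun i : Fin n => (i : ℕ) < j) := by simpa using hkj
  rw [prefixSum, prefixSum, ← Finset.add_sum_erase _ _ hk, ← Finset.add_sum_erase _ _ hk,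
    Function.update_self, Finset.sum_congr rfl fun i hi =>
      Function.update_of_ne (Finset.ne_of_mem_erase hi) x c]
  ring

lemma IsStacked.eq_zero_of_lt {a : ℕ} (hc : IsStacked c a) {j : Fin n} (hj : (j : ℕ) < a) :
    c j = 0 :=
  by_contra fun h => by have := hc j h; omega

lemma IsStacked.update_zero {a : ℕ} (hc : IsStacked c a) (ha : a < n) :
    IsStacked (Function.update c ⟨a, ha⟩ 0) (a + c ⟨a, ha⟩) := by
  intro j hj
  have hja : j ≠ ⟨a, ha⟩ := by rintro rfl; simp at hj
  rw [Function.update_of_ne hja] at hj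
  have h := hc j hj
  have hlt : a < (j : ℕ) := lt_of_le_of_ne (by omega) fun h' => hja (Fin.ext h'.symm)
  have := prefixSum_update_of_lt (c := c) (k := ⟨a, ha⟩) hlt 0
  omega

lemma IsStacked.update_of_pos {a m : ℕ} (hc : IsStacked c (a + m)) (ha : a < n) (hm : 0 < m) :
    IsStacked (Function.update c ⟨a, ha⟩ m) a := by
  have hca : c ⟨a, ha⟩ = 0 := hc.eq_zero_of_lt (by simpa using hm)
  intro j hj
  by_cases hja : j = ⟨a, ha⟩
  · subst hja
    rw [prefixSum_update_of_le (c := c) le_rfl, prefixSum_eq_of_forall c (Nat.zero_le _)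
      fun i _ hi => hc.eq_zero_of_lt (by simp at hi; omega)]
    simp [prefixSum]
  · rw [Function.update_of_ne hja] at hj
    have h := hc j hj
    have := prefixSum_update_of_lt (c := c) (k := ⟨a, ha⟩) (j := j) (by simp; omega) m
    omega

lemma sum_sign_of_forall_apply_add_one_eq :
    ∑ σ ∈ Finset.univ.filter fun σ : Equiv.Perm (Fin n) =>
        ∀ i, (σ i : ℕ) + 1 = c i + i,
      (Equiv.Perm.sign σ : ℤ) =
      if (∑ i, c i = n) ∧ IsStacked c 0 then (-1) ^ (Finset.univ.filter fun i => c i = 0).card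
      else 0 := by
  split_ifs with h
  · obtain ⟨σ₀, hσ₀⟩ := h.2.exists_perm h.1
    have hunique : Finset.univ.filter (fun σ : Equiv.Perm (Fin n) =>
        ∀ i, (σ i : ℕ) + 1 = c i + i) = {σ₀} := by
      refine Finset.eq_singleton_iff_unique_mem.2 ⟨by simpa using hσ₀, fun σ hσ => ?_⟩
      simp only [Finset.mem_filter, Finset.mem_univ, true_and] at hσ
      exact Equiv.ext fun i => Fin.ext (by have := hσ i; have := hσ₀ i; omega)
    rw [hunique, Finset.sum_singleton,
      sign_eq_neg_one_pow_of_le_apply_add_one σ₀ fun i => by have := hσ₀ i; omega]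
    congr 2
    ext i
    simp only [Finset.mem_filter, Finset.mem_univ, true_and, Fin.lt_def]
    have := hσ₀ i
    omega
  · exact Finset.sum_eq_zero fun σ hσ =>
      absurd (sum_eq_and_isStacked_of_perm (Finset.mem_filter.1 hσ).2) h

end Stacking

section BlockSystems

variable {α ι : Type*}

lemma card_update [DecidableEq ι] {P : ι → Finset α} {k : ι} {v : Finset α} :
    (fun i => (Function.update P k v i).card) = Function.update (fun i => (P i).card) k v.card :=
  Function.comp_update Finset.card P k v

variable [DecidableEq α] (g : Equiv.Perm α)

def IsBlockSystem (P : ι → Finset α) : Prop :=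
  (∀ i j, i ≠ j → Disjoint (P i) (P j)) ∧ ∀ i, (P i).image g = P i

variable {g}

lemma card_filter_update_empty [Fintype ι] [DecidableEq ι] {k : ι} {P : ι → Finset α}
    (hk : P k ≠ ∅) :
    (Finset.univ.filter fun i => Function.update P k ∅ i = ∅).card =
      (Finset.univ.filter fun i => P i = ∅).card + 1 := by
  rw [← Finset.card_insert_of_notMem (s := Finset.univ.filter fun i => P i = ∅) (a := k)
    (by simpa using hk)]
  congr 1
  ext i
  rcases eq_or_ne i k with rfl | hi <;> simp [*]

lemma isBlockSystem_empty : IsBlockSystem g fun _ : ι => (∅ : Finset α) :=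
  ⟨fun _ _ _ => Finset.disjoint_empty_left _, fun _ => rfl⟩

lemma IsBlockSystem.update [DecidableEq ι] {P : ι → Finset α} {k : ι} {v : Finset α}
    (hP : IsBlockSystem g P) (hv : v.image g = v) (hvP : ∀ j, j ≠ k → Disjoint v (P j)) :
    IsBlockSystem g (Function.update P k v) := by
  refine ⟨fun i j hij => ?_, fun i => ?_⟩
  · by_cases hi : i = k
    · subst hi
      rw [Function.update_self, Function.update_of_ne (Ne.symm hij)]
      exact hvP j (Ne.symm hij)
    · by_cases hj : j = k
      · subst hj
        rw [Function.update_self, Function.update_of_ne hi]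
        exact (hvP i hi).symm
      · rw [Function.update_of_ne hi, Function.update_of_ne hj]
        exact hP.1 i j hij
  · by_cases hi : i = k
    · subst hi; simpa using hv
    · simpa [hi] using hP.2 i

end BlockSystems

section StackedSystems

variable {α : Type*} [Fintype α] [DecidableEq α] (g : Equiv.Perm α) (n : ℕ)

/-- An encoding of the ordered partitions of `A` into nonempty `g`-invariant blocks. -/
def stackedSystems (a : ℕ) (A : Finset α) : Finset (Fin n → Finset α) :=
  Finset.univ.filter fun P =>
    IsBlockSystem g P ∧ IsStacked (fun i => (P i).card) a ∧ Finset.univ.biUnion P = A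

variable {g n}

lemma mem_stackedSystems {a : ℕ} {A : Finset α} {P : Fin n → Finset α} :
    P ∈ stackedSystems g n a A ↔
      IsBlockSystem g P ∧ IsStacked (fun i => (P i).card) a ∧ Finset.univ.biUnion P = A := by
  simp [stackedSystems]

lemma stackedSystems_empty (a : ℕ) : stackedSystems g n a ∅ = {fun _ => ∅} := by
  have hU (P : Fin n → Finset α) : Finset.univ.biUnion P = ∅ ↔ P = fun _ => ∅ := by
    simp [Finset.eq_empty_iff_forall_notMem, funext_iff, forall_comm (α := α)]
  ext P
  rw [mem_stackedSystems, Finset.mem_singleton, hU]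
  constructor
  · exact fun h => h.2.2
  · rintro rfl
    exact ⟨isBlockSystem_empty, fun _ h => absurd rfl h, rfl⟩

lemma ne_empty_of_mem_stackedSystems {a : ℕ} {A : Finset α} {P : Fin n → Finset α}
    (hP : P ∈ stackedSystems g n a A) (hA : A.Nonempty) (ha : a < n) : P ⟨a, ha⟩ ≠ ∅ := by
  obtain ⟨-, hst, hU⟩ := mem_stackedSystems.1 hP
  have hex : ∃ j, P j ≠ ∅ := by
    obtain ⟨x, hx⟩ := hA
    obtain ⟨j, -, hj⟩ := Finset.mem_biUnion.1 (hU ▸ hx)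
    exact ⟨j, Finset.ne_empty_of_mem hj⟩
  obtain ⟨j, hj, hmin⟩ := WellFounded.has_min wellFounded_lt {j | P j ≠ ∅} hex
  have hpre : prefixSum (fun i => (P i).card) j = 0 := by
    rw [prefixSum_eq_of_forall _ (Nat.zero_le _) fun i _ hi =>
      Finset.card_eq_zero.2 (by_contra fun h => hmin i h hi)]
    simp [prefixSum]
  have := hst j (by simpa using hj)
  rw [hpre, add_zero] at this
  rwa [show j = ⟨a, ha⟩ from Fin.ext this.symm] at hj

lemma update_empty_mem_stackedSystems {a : ℕ} {A B : Finset α} {P : Fin n → Finset α}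
    (hP : P ∈ stackedSystems g n a A) (ha : a < n) (hPa : P ⟨a, ha⟩ = B) :
    Function.update P ⟨a, ha⟩ ∅ ∈ stackedSystems g n (a + B.card) (A \ B) := by
  obtain ⟨hsys, hst, hU⟩ := mem_stackedSystems.1 hP
  refine mem_stackedSystems.2 ⟨hsys.update rfl fun _ _ => Finset.disjoint_empty_left _, ?_, ?_⟩
  · rw [card_update, Finset.card_empty, ← hPa]
    exact hst.update_zero ha
  · ext x
    simp only [Finset.mem_biUnion, Finset.mem_univ, true_and, Finset.mem_sdiff, ← hU]
    constructor
    · rintro ⟨i, hi⟩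
      have hik : i ≠ ⟨a, ha⟩ := by rintro rfl; simp at hi
      rw [Function.update_of_ne hik] at hi
      exact ⟨⟨i, hi⟩, fun hB => Finset.disjoint_left.1 (hsys.1 _ _ hik) hi (hPa ▸ hB)⟩
    · rintro ⟨⟨i, hi⟩, hxB⟩
      have hik : i ≠ ⟨a, ha⟩ := by rintro rfl; exact hxB (hPa ▸ hi)
      exact ⟨i, by rwa [Function.update_of_ne hik]⟩

lemma update_mem_stackedSystems {a : ℕ} {A B : Finset α} {P : Fin n → Finset α}
    (hP : P ∈ stackedSystems g n (a + B.card) (A \ B)) (ha : a < n) (hB : B.Nonempty)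
    (hBg : B.image g = B) (hBA : B ⊆ A) :
    Function.update P ⟨a, ha⟩ B ∈ stackedSystems g n a A := by
  obtain ⟨hsys, hst, hU⟩ := mem_stackedSystems.1 hP
  have hsub (i : Fin n) : P i ⊆ A \ B := hU ▸ Finset.subset_biUnion_of_mem P (Finset.mem_univ i)
  have hPa : P ⟨a, ha⟩ = ∅ :=
    Finset.card_eq_zero.1 (hst.eq_zero_of_lt (by simpa using hB.card_pos))
  refine mem_stackedSystems.2 ⟨hsys.update hBg fun j _ =>
    Finset.disjoint_of_subset_right (hsub j) Finset.disjoint_sdiff, ?_, ?_⟩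
  · rw [card_update]
    exact hst.update_of_pos ha hB.card_pos
  · ext x
    simp only [Finset.mem_biUnion, Finset.mem_univ, true_and]
    constructor
    · rintro ⟨i, hi⟩
      rcases eq_or_ne i ⟨a, ha⟩ with rfl | hik
      · exact hBA (by simpa using hi)
      · rw [Function.update_of_ne hik] at hi
        exact (Finset.mem_sdiff.1 (hsub i hi)).1
    · intro hx
      by_cases hxB : x ∈ B
      · exact ⟨⟨a, ha⟩, by simpa using hxB⟩
      · obtain ⟨i, -, hi⟩ := Finset.mem_biUnion.1 (hU ▸ Finset.mem_sdiff.2 ⟨hx, hxB⟩)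
        have hik : i ≠ ⟨a, ha⟩ := by rintro rfl; simp [hPa] at hi
        exact ⟨i, by rwa [Function.update_of_ne hik]⟩

end StackedSystems

section Recursion

variable {α : Type*} [Fintype α] [DecidableEq α] {g : Equiv.Perm α} {n : ℕ}

/-- Removing the first block `B` is a bijection onto the stacked systems of `A \ B`. -/
lemma sum_filter_apply_eq_stackedSystems {a : ℕ} {A B : Finset α} (ha : a < n)
    (hB : B.Nonempty) (hBg : B.image g = B) (hBA : B ⊆ A) :
    ∑ P ∈ (stackedSystems g n a A).filter (fun P => P ⟨a, ha⟩ = B),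
      (-1 : ℤ) ^ (Finset.univ.filter fun i => P i = ∅).card =
    -∑ P ∈ stackedSystems g n (a + B.card) (A \ B),
      (-1 : ℤ) ^ (Finset.univ.filter fun i => P i = ∅).card := by
  rw [← Finset.sum_neg_distrib]
  refine Finset.sum_nbij' (fun P => Function.update P ⟨a, ha⟩ ∅)
    (fun P => Function.update P ⟨a, ha⟩ B) ?_ ?_ ?_ ?_ ?_
  · intro P hP
    obtain ⟨hP, hPa⟩ := Finset.mem_filter.1 hP
    exact update_empty_mem_stackedSystems hP ha hPa
  · intro P hP
    exact Finset.mem_filter.2 ⟨update_mem_stackedSystems hP ha hB hBg hBA, by simp⟩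
  · intro P hP
    obtain ⟨-, hPa⟩ := Finset.mem_filter.1 hP
    simp [← hPa]
  · intro P hP
    obtain ⟨-, hst, -⟩ := mem_stackedSystems.1 hP
    have hPa : P ⟨a, ha⟩ = ∅ :=
      Finset.card_eq_zero.1 (hst.eq_zero_of_lt (by simpa using hB.card_pos))
    simp [← hPa]
  · intro P hP
    obtain ⟨-, hPa⟩ := Finset.mem_filter.1 hP
    rw [card_filter_update_empty (hPa ▸ hB.ne_empty), pow_succ]
    ring

/-- Summing over the first block `B`, the signed count of stacked systems satisfies the
recursion `f(A) = -∑_B f(A \ B)`, which `sum_neg_one_pow_orbitCount` solves. -/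
theorem sum_stackedSystems (A : Finset α) (hA : A.image g = A) (a : ℕ) (haA : a + A.card ≤ n) :
    ∑ P ∈ stackedSystems g n a A, (-1 : ℤ) ^ (Finset.univ.filter fun i => P i = ∅).card =
      (-1) ^ (n + orbitCount g A) := by
  induction A using Finset.strongInduction generalizing a with
  | H A ih =>
  rcases A.eq_empty_or_nonempty with rfl | hA₀
  · simp [stackedSystems_empty, orbitCount]
  have ha : a < n := by have := hA₀.card_pos; omega
  set T := A.powerset.filter fun B => B.Nonempty ∧ B.image g = B
  have hmaps : ∀ P ∈ stackedSystems g n a A, P ⟨a, ha⟩ ∈ T := fun P hP => by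
    obtain ⟨hsys, -, hU⟩ := mem_stackedSystems.1 hP
    simp only [T, Finset.mem_filter, Finset.mem_powerset, Finset.nonempty_iff_ne_empty]
    exact ⟨hU ▸ Finset.subset_biUnion_of_mem P (Finset.mem_univ _),
      ne_empty_of_mem_stackedSystems hP hA₀ ha, hsys.2 _⟩
  have hfiber : ∀ B ∈ T, ∑ P ∈ (stackedSystems g n a A).filter (fun P => P ⟨a, ha⟩ = B),
      (-1 : ℤ) ^ (Finset.univ.filter fun i => P i = ∅).card =
        -(-1) ^ (n + orbitCount g A) * (-1) ^ orbitCount g B := by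
    intro B hB
    obtain ⟨hBA, hB₀, hBg⟩ : B ⊆ A ∧ B.Nonempty ∧ B.image g = B := by simpa [T] using hB
    rw [sum_filter_apply_eq_stackedSystems ha hB₀ hBg hBA,
      ih (A \ B) (Finset.sdiff_ssubset hBA hB₀) (image_sdiff_of_image_eq_self hA hBg)
        (a + B.card) (by rw [Finset.card_sdiff_of_subset hBA]; have := B.card_le_card hBA; omega),
      ← orbitCount_sdiff hBg hBA, neg_mul, ← pow_add,
      show n + (orbitCount g (A \ B) + orbitCount g B) + orbitCount g B =
        n + orbitCount g (A \ B) + 2 * orbitCount g B by ring, pow_add _ _ (2 * _), pow_mul]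
    simp
  rw [← Finset.sum_fiberwise_of_maps_to hmaps, Finset.sum_congr rfl hfiber, ← Finset.mul_sum,
    sum_neg_one_pow_orbitCount hA hA₀]
  ring

end Recursion

section SignCharacter

def onesP (n : ℕ) : PartN n :=
  ⟨Multiset.replicate n 1, fun h => by rw [Multiset.eq_of_mem_replicate h]; exact one_pos,
    by simp⟩

lemma part_onesP {n i : ℕ} (hi : i < n) : part (onesP n) i = 1 := by
  have hlen : i < ((Multiset.replicate n 1).sort (· ≤ ·)).reverse.length := by
    simpa [← Multiset.coe_card] using hi
  rw [part, onesP, List.getD_eq_getElem _ _ hlen]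
  exact Multiset.eq_of_mem_replicate
    ((Multiset.mem_sort _).1 (List.mem_reverse.1 (List.getElem_mem hlen)))

lemma permCharI_eq_card {n : ℕ} {ι : Type} [Fintype ι] [DecidableEq ι] (c : ι → ℕ)
    (g : Equiv.Perm (Fin n)) :
    permCharI c g = ((Finset.univ.filter fun P : ι → Finset (Fin n) =>
      (∀ i, (P i).card = c i) ∧ IsBlockSystem g P).card : ℂ) := by
  rw [permCharI, Nat.card_eq_fintype_card, Fintype.card_subtype]
  congr 2
  exact Finset.filter_congr fun P _ => by rw [IsBlockSystem]

variable {n : ℕ} (g : Equiv.Perm (Fin n))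

lemma irrChar_onesP_eq_sum : irrChar (onesP n) g = ∑ σ : Equiv.Perm (Fin n), ∑ P,
    if IsBlockSystem g P ∧ ∀ i, (σ i : ℕ) + 1 = (P i).card + i then
      ((Equiv.Perm.sign σ : ℤ) : ℂ) else 0 := by
  refine Finset.sum_congr rfl fun σ _ => ?_
  simp only [part_onesP (Fin.isLt _)]
  split_ifs with hσ
  · rw [permCharI_eq_card, Finset.sum_ite, Finset.sum_const_zero, add_zero, Finset.sum_const,
      nsmul_eq_mul, mul_comm]
    congr 3
    ext P
    simp only [Finset.mem_filter, Finset.mem_univ, true_and]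
    refine ⟨fun h => ⟨h.2, fun i => ?_⟩, fun h => ⟨fun i => ?_, h.1⟩⟩
    · have := h.1 i
      have := hσ i
      omega
    · have := h.2 i
      omega
  · refine (mul_zero _).trans (Finset.sum_eq_zero fun P _ => if_neg fun h => hσ fun i => ?_).symm
    have := h.2 i
    omega

lemma sum_sign_of_isBlockSystem {P : Fin n → Finset (Fin n)} (hP : IsBlockSystem g P) :
    ∑ σ ∈ Finset.univ.filter fun σ : Equiv.Perm (Fin n) =>
        ∀ i, (σ i : ℕ) + 1 = (P i).card + i,
      (Equiv.Perm.sign σ : ℤ) =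
    if P ∈ stackedSystems g n 0 Finset.univ then
      (-1) ^ (Finset.univ.filter fun i => P i = ∅).card else 0 := by
  have hcover : Finset.univ.biUnion P = Finset.univ ↔ ∑ i, (P i).card = n := by
    rw [← Finset.card_biUnion fun i _ j _ hij => hP.1 i j hij, ← Finset.card_eq_iff_eq_univ,
      Fintype.card_fin]
  have hmem : P ∈ stackedSystems g n 0 Finset.univ ↔
      (∑ i, (P i).card = n) ∧ IsStacked (fun i => (P i).card) 0 := by
    rw [mem_stackedSystems, hcover]
    exact ⟨fun h => ⟨h.2.2, h.2.1⟩, fun h => ⟨hP, h.2, h.1⟩⟩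
  rw [sum_sign_of_forall_apply_add_one_eq]
  simp only [hmem, Finset.card_eq_zero]

theorem irrChar_onesP : irrChar (onesP n) g = (Equiv.Perm.sign g : ℤ) := by
  have hP (P : Fin n → Finset (Fin n)) : ∑ σ : Equiv.Perm (Fin n),
      (if IsBlockSystem g P ∧ ∀ i, (σ i : ℕ) + 1 = (P i).card + i then
        ((Equiv.Perm.sign σ : ℤ) : ℂ) else 0) =
      ((if P ∈ stackedSystems g n 0 Finset.univ then
        (-1) ^ (Finset.univ.filter fun i => P i = ∅).card else 0 : ℤ) : ℂ) := by
    by_cases hsys : IsBlockSystem g P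
    · simp only [hsys, true_and, ← sum_sign_of_isBlockSystem g hsys, Finset.sum_filter]
      push_cast
      rfl
    · rw [if_neg fun h => hsys (mem_stackedSystems.1 h).1]
      simp [hsys]
  rw [irrChar_onesP_eq_sum, Finset.sum_comm, Finset.sum_congr rfl fun P _ => hP P,
    ← Int.cast_sum, Finset.sum_ite_mem, Finset.univ_inter,
    sum_stackedSystems _ (Finset.image_univ_of_surjective g.surjective) 0 (by simp),
    sign_eq_neg_one_pow_orbitCount, Fintype.card_fin]

end SignCharacter

section TwoRow

variable {n k : ℕ} (h1 : 0 < k) (h2 : k < n)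

lemma part_twoRowP (hk : k ≤ n - k) (i : ℕ) :
    part (twoRowP n k h1 h2) i = if i = 0 then n - k else if i = 1 then k else 0 := by
  have hsort : Multiset.sort ({n - k, k} : Multiset ℕ) (· ≤ ·) = [k, n - k] := by
    rw [Multiset.pair_comm, Multiset.insert_eq_cons, Multiset.sort_cons _ _ _ (by simpa using hk),
      Multiset.sort_singleton]
  rw [part, show (twoRowP n k h1 h2).parts = {n - k, k} from rfl, hsort]
  rcases i with _ | _ | i <;> simp

lemma sigmaChar_twoRowP (hk : k ≤ n - k) (g : Equiv.Perm (Fin n)) :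
    sigmaChar (twoRowP n k h1 h2) g =
      ((Finset.univ.filter fun B : Finset (Fin n) => B.card = k ∧ B.image g = B).card : ℂ) := by
  have hpart := part_twoRowP h1 h2 hk
  set j₀ : Fin n := ⟨0, by omega⟩
  set j₁ : Fin n := ⟨1, by omega⟩
  have hj₀₁ : j₁ ≠ j₀ := by simp [j₀, j₁, Fin.ext_iff]
  let system (B : Finset (Fin n)) : Fin n → Finset (Fin n) :=
    Function.update (Function.update (fun _ => ∅) j₀ Bᶜ) j₁ B
  have hsystem (B : Finset (Fin n)) (i : Fin n) :
      system B i = if i = j₁ then B else if i = j₀ then Bᶜ else ∅ := by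
    simp only [system, Function.update_apply]
  have hcard (B : Finset (Fin n)) (hB : B.card = k) (i : Fin n) :
      (system B i).card = part (twoRowP n k h1 h2) i := by
    rw [hsystem, hpart]
    split_ifs <;> simp_all [Finset.card_compl, j₀, j₁, Fin.ext_iff]
  have hsys (B : Finset (Fin n)) (hB : B.image g = B) : IsBlockSystem g (system B) := by
    refine (isBlockSystem_empty.update ?_ fun _ _ => Finset.disjoint_empty_right _).update hB
      fun j hj => ?_
    · rw [Finset.compl_eq_univ_sdiff,
        image_sdiff_of_image_eq_self (Finset.image_univ_of_surjective g.surjective) hB]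
    · rw [Function.update_apply]
      split_ifs
      exacts [disjoint_compl_right, Finset.disjoint_empty_right _]
  have hinv (P : Fin n → Finset (Fin n))
      (hP : (∀ i, (P i).card = part (twoRowP n k h1 h2) i) ∧ IsBlockSystem g P) :
      system (P j₁) = P := by
    funext i
    rw [hsystem]
    split_ifs with hi₁ hi₀
    · rw [hi₁]
    · subst hi₀
      refine (Finset.eq_of_subset_of_card_le (fun x hx => Finset.mem_compl.2 fun hx' =>
        Finset.disjoint_left.1 (hP.2.1 _ _ hj₀₁.symm) hx hx') ?_).symm
      rw [Finset.card_compl, hP.1, hP.1, hpart, hpart]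
      simp [j₀, j₁]
    · refine (Finset.card_eq_zero.1 ?_).symm
      rw [hP.1, hpart, if_neg (by simpa [j₀, Fin.ext_iff] using hi₀),
        if_neg (by simpa [j₁, Fin.ext_iff] using hi₁)]
  rw [sigmaChar, permCharI_eq_card]
  congr 1
  refine Finset.card_nbij' (fun P => P j₁) system (fun P hP => ?_) (fun B hB => ?_)
    (fun P hP => hinv P (by simpa using hP)) (fun B _ => by simp [hsystem])
  · simp only [Finset.coe_filter, Finset.mem_univ, true_and, Set.mem_ofPred_eq] at hP ⊢
    exact ⟨by simpa [hpart, j₁] using hP.1 j₁, hP.2.2 j₁⟩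
  · simp only [Finset.coe_filter, Finset.mem_univ, true_and, Set.mem_ofPred_eq] at hB ⊢
    exact ⟨hcard B hB.1, hsys B hB.2⟩

end TwoRow

section Vanishing

variable {α : Type*} [Fintype α]

lemma two_mul_card_le_of_injective {r : ℕ} {f : α → Finset (Fin r)}
    (hf : Function.Injective f) :
    2 * Fintype.card α ≤ ∑ x, (f x).card + r + 2 := by
  have h₀ : (Finset.univ.filter fun x => (f x).card = 0).card ≤ 1 :=
    Finset.card_le_one.2 fun a ha b hb => hf (by simp_all)
  have h₁ : (Finset.univ.filter fun x => (f x).card = 1).card ≤ r := by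
    calc _ ≤ (Finset.univ.powersetCard 1 : Finset (Finset (Fin r))).card :=
          Finset.card_le_card_of_injOn f (fun x hx => by simp_all) hf.injOn
      _ = r := by simp
  have hpt (x : α) : 2 ≤ (f x).card + 2 * (if (f x).card = 0 then 1 else 0) +
      (if (f x).card = 1 then 1 else 0) := by
    split_ifs <;> omega
  have := Finset.sum_le_sum fun x (_ : x ∈ Finset.univ) => hpt x
  simp only [Finset.sum_add_distrib, ← Finset.mul_sum, Finset.sum_boole, Finset.sum_const,
    Finset.card_univ, smul_eq_mul, Nat.cast_id] at this
  omega

/-- Otherwise the membership codes `{i | x ∈ t i}` would be distinct subsets of `Fin r` of total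
size `r k`, at most one of them empty and at most `r` of them singletons. -/
lemma exists_ne_forall_mem_iff [DecidableEq α] {r k : ℕ} (t : Fin r → Finset α)
    (ht : ∀ i, (t i).card = k) (h : r * (k + 1) + 2 < 2 * Fintype.card α) :
    ∃ a b, a ≠ b ∧ ∀ i, a ∈ t i ↔ b ∈ t i := by
  by_contra hsep
  set code : α → Finset (Fin r) := fun x => Finset.univ.filter fun i => x ∈ t i
  have hcode : Function.Injective code := fun a b hab => by
    by_contra hne
    exact hsep ⟨a, b, hne, fun i => by simpa [code] using Finset.ext_iff.1 hab i⟩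
  have hsum : ∑ x, (code x).card = r * k := by
    simp only [code, Finset.card_filter]
    rw [Finset.sum_comm]
    simp [ht]
  have := two_mul_card_le_of_injective hcode
  rw [hsum] at this
  linarith

lemma sum_sign_eq_zero_of_swap [DecidableEq α] (p : Equiv.Perm α → Prop) [DecidablePred p]
    {a b : α} (hab : a ≠ b)
    (hp : ∀ x, p (x * Equiv.swap a b) ↔ p x) :
    ∑ x ∈ Finset.univ.filter p, (Equiv.Perm.sign x : ℤ) = 0 := by
  refine Finset.sum_involution (fun x _ => x * Equiv.swap a b) (fun x _ => ?_) (fun x _ _ h => ?_)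
    (fun x hx => ?_) (fun x _ => ?_)
  · simp [Equiv.Perm.sign_mul, Equiv.Perm.sign_swap hab]
  · have := congrArg (· a) (mul_eq_left.1 h)
    simp only [Equiv.swap_apply_left, Equiv.Perm.one_apply] at this
    exact hab this.symm
  · exact Finset.mem_filter.2 ⟨Finset.mem_univ _, (hp x).2 (Finset.mem_filter.1 hx).2⟩
  · simp [mul_assoc]

/-- Each `r`-tuple of `k`-sets is fixed by some transposition, so the signed count of
permutations fixing it vanishes. -/
lemma sum_card_fixed_pow_mul_sign_eq_zero [DecidableEq α] {r k : ℕ}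
    (h : r * (k + 1) + 2 < 2 * Fintype.card α) :
    ∑ x : Equiv.Perm α,
      ((Finset.univ.filter fun B : Finset α => B.card = k ∧ B.image x = B).card : ℤ) ^ r *
        Equiv.Perm.sign x = 0 := by
  set F : Equiv.Perm α → Finset (Finset α) :=
    fun x => Finset.univ.filter fun B => B.card = k ∧ B.image x = B
  have hpow (x : Equiv.Perm α) : ((F x).card : ℤ) ^ r =
      ((Finset.univ.filter fun t : Fin r → Finset α => ∀ i, t i ∈ F x).card : ℤ) := by
    rw [show (Finset.univ.filter fun t : Fin r → Finset α => ∀ i, t i ∈ F x) =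
      Fintype.piFinset fun _ => F x by ext; simp [Fintype.mem_piFinset], Fintype.card_piFinset]
    simp
  calc ∑ x, ((F x).card : ℤ) ^ r * Equiv.Perm.sign x
      = ∑ x, ∑ t : Fin r → Finset α,
          if ∀ i, t i ∈ F x then (Equiv.Perm.sign x : ℤ) else 0 := by
        refine Finset.sum_congr rfl fun x _ => ?_
        rw [hpow, Finset.card_filter, Nat.cast_sum, Finset.sum_mul]
        simp
    _ = ∑ t : Fin r → Finset α, ∑ x ∈ Finset.univ.filter (fun x => ∀ i, t i ∈ F x),
          (Equiv.Perm.sign x : ℤ) := by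
        rw [Finset.sum_comm]
        simp [Finset.sum_filter]
    _ = 0 := Finset.sum_eq_zero fun t _ => ?_
  by_cases ht : ∀ i, (t i).card = k
  · obtain ⟨a, b, hab, hmem⟩ := exists_ne_forall_mem_iff t ht h
    refine sum_sign_eq_zero_of_swap (fun x => ∀ i, t i ∈ F x) hab fun x =>
      forall_congr' fun i => ?_
    simp only [F, Finset.mem_filter, Finset.mem_univ, true_and, Equiv.Perm.coe_mul,
      ← Finset.image_image, image_swap_eq_self (hmem i)]
  · obtain ⟨i, hi⟩ := not_forall.1 ht
    exact Finset.sum_eq_zero fun x hx => absurd ((Finset.mem_filter.1 hx).2 i) (by simp [F, hi])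

end Vanishing

theorem stmt10 (n k : ℕ) (hk1 : 1 ≤ k) (hk2 : k ≤ n / 2) (r : ℕ)
    (hcov : ∀ lam : PartN n,
      classInner (fun g => sigmaChar (twoRowP n k (by omega) (by omega)) g ^ r)
        (irrChar lam) ≠ 0) :
    (2 * (n - 1) + k) / (k + 1) ≤ r := by
  by_contra! hr
  have hlt : r * (k + 1) + 2 < 2 * Fintype.card (Fin n) := by
    have h : (r + 1) * (k + 1) ≤ 2 * (n - 1) + k := (Nat.le_div_iff_mul_le (by omega)).1 hr
    rw [add_mul, one_mul] at h
    rw [Fintype.card_fin]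
    omega
  apply hcov (onesP n)
  have hvanish := sum_card_fixed_pow_mul_sign_eq_zero hlt
  simp only [classInner, sigmaChar_twoRowP _ _ (show k ≤ n - k by omega), irrChar_onesP,
    Equiv.Perm.sign_inv]
  exact mul_eq_zero_of_right _ (by exact_mod_cast hvanish)

end CharCover
end
end
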